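/- Let G be an abelian group and A, B finite nonempty subsets with |A| ≥ |B| ≥ 2. Suppose E(A, B) is large enough that applying the Shkredov–Yekhanin theorem is possible: assume that for any nonempty B₀ ⊆ B with E(A, B₀) ≥ |A||B₀|²/M there exists nonempty G₀ ⊆ B₀ with dim(G₀) ≤ C·M·log|A| and E(A, G₀) ≥ 2⁻⁵ E(A, B₀). Let K := |A||B|²/E(A, B), and let M ≥ K. Then there is a partition B = B' ⊔ B'' such that dim(B') = O(M log|A| · log(|B|M/K)), E(A, B') = Ω(E(A, B)), and E(A, B'') ≤ |A||B''|²/M. -/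

import Mathlib

open Finset

/-- The additive energy `E(X, Y)`. -/
def energy {G : Type*} [AddCommGroup G] [DecidableEq G] (X Y : Finset G) : ℕ :=
  (((X ×ˢ X) ×ˢ Y ×ˢ Y).filter fun q => q.1.1 + q.2.1 = q.1.2 + q.2.2).card

/-- A finset `S` is dissociated if the only `{-1,0,1}`-combination of its
elements summing to zero is the trivial one. -/
def Dissociated {G : Type*} [AddCommGroup G] (S : Finset G) : Prop :=
  ∀ ε : G → ℤ, (∀ s ∈ S, ε s = -1 ∨ ε s = 0 ∨ ε s = 1) →
    ∑ s ∈ S, ε s • s = 0 → ∀ s ∈ S, ε s = 0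

/-- The additive dimension of `A` : the size of a largest dissociated subset of `A`. -/
noncomputable def addDim {G : Type*} [AddCommGroup G] (A : Finset G) : ℕ :=
  sSup {d : ℕ | ∃ S : Finset G, S ⊆ A ∧ Dissociated S ∧ S.card = d}

/-- `Span(S) = { ∑_{s ∈ S} ε_s s : ε_s ∈ {0, -1, 1} }`. -/
def spn {G : Type*} [AddCommGroup G] (S : Finset G) : Set G :=
  {x | ∃ ε : G → ℤ, (∀ s ∈ S, ε s = -1 ∨ ε s = 0 ∨ ε s = 1) ∧ x = ∑ s ∈ S, ε s • s}

/-! Greedy extraction. While the remaining part `B₀` of `B` satisfies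
`E(A, B₀) ≥ |A||B₀|²/M`, the hypothesis yields `G₀ ⊆ B₀` of dimension at most `C M log|A|` carrying
a `2⁻⁵`-fraction of `E(A, B₀)`; remove it and continue. Energy is superadditive over disjoint
unions, so each round multiplies the remaining energy by at most `31/32`, whereas a nonempty set
still eligible for a round has energy at least `|A|/M`. Starting from `E(A, B) = |A||B|²/K`,
there are `O(log(|B|² M/K)) = O(log(|B| M/K))` rounds, and dimension is subadditive. `B'` is the
union of the extracted pieces; the first of them already carries `2⁻⁵ E(A, B)`. -/

theorem Finset.addEnergy_add_addEnergy_le_addEnergy_union_right {α : Type*} [DecidableEq α]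
    [Add α] (s : Finset α) {t₁ t₂ : Finset α} (h : Disjoint t₁ t₂) :
    s.addEnergy t₁ + s.addEnergy t₂ ≤ s.addEnergy (t₁ ∪ t₂) := by
  unfold addEnergy
  rw [← card_union_of_disjoint (disjoint_filter_filter <|
    disjoint_product.2 <| .inr <| disjoint_product.2 <| .inl h), ← filter_union]
  gcongr
  exact union_subset (by gcongr; exacts [subset_union_left, subset_union_left])
    (by gcongr; exacts [subset_union_right, subset_union_right])

section Dimension

variable {G : Type*} [AddCommGroup G]

theorem Dissociated.mono {S T : Finset G} (hT : Dissociated T) (h : S ⊆ T) : Dissociated S := by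
  classical
  intro ε hε hsum s hs
  have hext : ∀ t ∈ T, (if t ∈ S then ε t else 0) = -1 ∨ (if t ∈ S then ε t else 0) = 0 ∨
      (if t ∈ S then ε t else 0) = 1 := fun t _ => by
    split_ifs with ht
    exacts [hε t ht, .inr (.inl rfl)]
  have hsum' : ∑ t ∈ T, (if t ∈ S then ε t else 0) • t = 0 := by
    simp_rw [ite_smul, zero_smul, sum_ite_mem, inter_eq_right.2 h, hsum]
  simpa [hs] using hT _ hext hsum' s (h hs)

theorem le_addDim {A S : Finset G} (hS : S ⊆ A) (hd : Dissociated S) : S.card ≤ addDim A :=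
  le_csSup ⟨A.card, by rintro _ ⟨S, hS, -, rfl⟩; exact card_le_card hS⟩ ⟨S, hS, hd, rfl⟩

theorem addDim_le {A : Finset G} {n : ℕ}
    (h : ∀ S ⊆ A, Dissociated S → S.card ≤ n) : addDim A ≤ n :=
  csSup_le' <| by rintro _ ⟨S, hS, hd, rfl⟩; exact h S hS hd

@[simp]
theorem addDim_empty : addDim (∅ : Finset G) = 0 :=
  Nat.le_zero.1 <| addDim_le fun S hS _ => by simp [subset_empty.1 hS]

theorem addDim_union_le [DecidableEq G] (X Y : Finset G) :
    addDim (X ∪ Y) ≤ addDim X + addDim Y :=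
  addDim_le fun S hS hd => calc
    S.card = (S ∩ X).card + (S \ X).card := (card_inter_add_card_sdiff S X).symm
    _ ≤ addDim X + addDim Y := by
      gcongr
      · exact le_addDim inter_subset_right (hd.mono inter_subset_left)
      · refine le_addDim (fun s hs => ?_) (hd.mono sdiff_subset)
        obtain ⟨hsS, hsX⟩ := mem_sdiff.1 hs
        exact (mem_union.1 (hS hsS)).resolve_left hsX

end Dimension

section Decomposition

variable {G : Type*} [AddCommGroup G] [DecidableEq G]

theorem energy_eq_addEnergy (X Y : Finset G) : energy X Y = X.addEnergy Y := rfl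

theorem energy_add_energy_sdiff_le (A : Finset G) {X Y : Finset G} (h : X ⊆ Y) :
    energy A X + energy A (Y \ X) ≤ energy A Y := by
  simpa only [energy_eq_addEnergy, union_sdiff_of_subset h] using
    A.addEnergy_add_addEnergy_le_addEnergy_union_right (disjoint_sdiff (s := X) (t := Y))

theorem energy_le_of_not_nonempty_and_le {A B₀ : Finset G} {M : ℝ}
    (h : ¬ (B₀.Nonempty ∧ (A.card : ℝ) * B₀.card ^ 2 / M ≤ energy A B₀)) :
    (energy A B₀ : ℝ) ≤ A.card * B₀.card ^ 2 / M := by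
  obtain rfl | hB₀ := B₀.eq_empty_or_nonempty
  · simp [energy_eq_addEnergy]
  · exact (not_le.1 fun h' => h ⟨hB₀, h'⟩).le

theorem card_div_le_energy_of_le {A B₀ : Finset G} {M : ℝ} (hM : 0 < M) (hB₀ : B₀.Nonempty)
    (hlarge : (A.card : ℝ) * B₀.card ^ 2 / M ≤ energy A B₀) :
    (A.card : ℝ) / M ≤ energy A B₀ := by
  refine le_trans ?_ hlarge
  have : (1 : ℝ) ≤ B₀.card := by exact_mod_cast hB₀.card_pos
  gcongr
  exact le_mul_of_one_le_right (Nat.cast_nonneg _) (one_le_pow₀ this)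

theorem exists_decomposition_of_pow_mul_energy_lt {A B : Finset G} {M D δ : ℝ} (hM : 0 < M)
    (hD : 0 ≤ D) (hδ : δ ≤ 1)
    (hyp : ∀ B₀ ⊆ B, B₀.Nonempty → (A.card : ℝ) * B₀.card ^ 2 / M ≤ energy A B₀ →
      ∃ G₀ ⊆ B₀, (addDim G₀ : ℝ) ≤ D ∧ δ * energy A B₀ ≤ energy A G₀)
    (n : ℕ) {B₀ : Finset G} (hB₀ : B₀ ⊆ B) (hn : (1 - δ) ^ n * energy A B₀ < A.card / M) :
    ∃ B' B'' : Finset G, Disjoint B' B'' ∧ B' ∪ B'' = B₀ ∧ (addDim B' : ℝ) ≤ n * D ∧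
      (B₀.Nonempty → (A.card : ℝ) * B₀.card ^ 2 / M ≤ energy A B₀ →
        δ * energy A B₀ ≤ energy A B') ∧
      (energy A B'' : ℝ) ≤ A.card * B''.card ^ 2 / M := by
  by_cases hlarge : B₀.Nonempty ∧ (A.card : ℝ) * B₀.card ^ 2 / M ≤ energy A B₀
  swap
  · refine ⟨∅, B₀, disjoint_empty_left _, empty_union _, ?_,
      fun hne hl => absurd ⟨hne, hl⟩ hlarge, energy_le_of_not_nonempty_and_le hlarge⟩
    rw [addDim_empty, Nat.cast_zero]
    positivity
  cases n with
  | zero =>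
    rw [pow_zero, one_mul] at hn
    exact absurd (card_div_le_energy_of_le hM hlarge.1 hlarge.2) hn.not_ge
  | succ n =>
    obtain ⟨G₀, hG₀, hdim, hG₀E⟩ := hyp B₀ hB₀ hlarge.1 hlarge.2
    have hsplit : (energy A G₀ : ℝ) + energy A (B₀ \ G₀) ≤ energy A B₀ := by
      exact_mod_cast energy_add_energy_sdiff_le A hG₀
    have hn' : (1 - δ) ^ n * energy A (B₀ \ G₀) < A.card / M := calc
      (1 - δ) ^ n * energy A (B₀ \ G₀) ≤ (1 - δ) ^ n * ((1 - δ) * energy A B₀) := by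
        have := sub_nonneg.2 hδ
        gcongr
        linarith
      _ = (1 - δ) ^ (n + 1) * energy A B₀ := by ring
      _ < A.card / M := hn
    obtain ⟨B', B'', hdisj, hunion, hdim', -, hsmall⟩ :=
      exists_decomposition_of_pow_mul_energy_lt hM hD hδ hyp n (sdiff_subset.trans hB₀) hn'
    have hB'' : B'' ⊆ B₀ \ G₀ := hunion ▸ subset_union_right
    refine ⟨G₀ ∪ B', B'', disjoint_union_left.2 ⟨disjoint_sdiff.mono_right hB'', hdisj⟩,
      by rw [union_assoc, hunion, union_sdiff_of_subset hG₀], ?_, fun _ _ => ?_, hsmall⟩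
    · calc (addDim (G₀ ∪ B') : ℝ) ≤ addDim G₀ + addDim B' := by exact_mod_cast addDim_union_le _ _
        _ ≤ (n + 1 : ℕ) * D := by push_cast; linarith
    · exact hG₀E.trans (by exact_mod_cast addEnergy_mono_right subset_union_left)

end Decomposition

theorem Real.lt_pow_floor_log_div_log_add_one {r x : ℝ} (hr : 1 < r) (hx : 0 < x) :
    x < r ^ (⌊Real.log x / Real.log r⌋₊ + 1) := by
  have hlog := Nat.lt_floor_add_one (Real.log x / Real.log r)
  rw [div_lt_iff₀ (Real.log_pos hr)] at hlog
  rw [← Real.log_lt_log_iff hx (by positivity), Real.log_pow]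
  exact_mod_cast hlog

theorem Real.floor_two_mul_log_div_log_add_one_le {r x : ℝ} (hr : 1 < r) (hx : 2 ≤ x) :
    ((⌊2 * Real.log x / Real.log r⌋₊ + 1 : ℕ) : ℝ) ≤
      (2 / Real.log r + 1 / Real.log 2) * Real.log x := by
  have hlog2 : 0 < Real.log 2 := Real.log_pos one_lt_two
  have hlogx : Real.log 2 ≤ Real.log x := Real.log_le_log two_pos hx
  have hfloor := Nat.floor_le (a := 2 * Real.log x / Real.log r)
    (div_nonneg (by linarith) (Real.log_pos hr).le)
  have hone : 1 ≤ Real.log x / Real.log 2 := (one_le_div hlog2).2 hlogx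
  have hsplit : (2 / Real.log r + 1 / Real.log 2) * Real.log x =
      2 * Real.log x / Real.log r + Real.log x / Real.log 2 := by ring
  push_cast
  linarith

theorem inv_pow_floor_mul_lt_div {a b e K M r : ℝ} (hr : 1 < r) (ha : 0 < a) (hb : 0 < b)
    (hK : 0 < K) (hKM : K ≤ M) (he : e = a * b ^ 2 / K) :
    r⁻¹ ^ (⌊2 * Real.log (b * M / K) / Real.log r⌋₊ + 1) * e < a / M := by
  have hM := hK.trans_le hKM
  have hpow := Real.lt_pow_floor_log_div_log_add_one hr (by positivity : 0 < (b * M / K) ^ 2)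
  rw [Real.log_pow, Nat.cast_ofNat] at hpow
  have heM : e * M / a ≤ (b * M / K) ^ 2 := calc
    e * M / a = b ^ 2 * (M / K) := by rw [he]; field_simp
    _ ≤ b ^ 2 * (M / K) ^ 2 := by
      gcongr
      exact le_self_pow₀ ((one_le_div hK).2 hKM) two_ne_zero
    _ = (b * M / K) ^ 2 := by ring
  rw [inv_pow, inv_mul_lt_iff₀ (by positivity), mul_div_assoc', lt_div_iff₀ hM,
    ← div_lt_iff₀ ha]
  exact heM.trans_lt hpow

/-- Corollary 5: energy decomposition into a structured part and a part of small energy. -/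
theorem energy_decomposition :
    ∀ C : ℝ, 0 < C → ∃ c₁ c₂ : ℝ, 0 < c₁ ∧ 0 < c₂ ∧
      ∀ (G : Type) [AddCommGroup G] [DecidableEq G] (A B : Finset G) (M K : ℝ),
        2 ≤ B.card → B.card ≤ A.card →
        K = (A.card : ℝ) * (B.card : ℝ) ^ 2 / (energy A B : ℝ) →
        K ≤ M →
        (∀ B₀ : Finset G, B₀ ⊆ B → B₀.Nonempty →
          (A.card : ℝ) * (B₀.card : ℝ) ^ 2 / M ≤ (energy A B₀ : ℝ) →
          ∃ G₀ : Finset G, G₀ ⊆ B₀ ∧ G₀.Nonempty ∧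
            (addDim G₀ : ℝ) ≤ C * M * Real.log A.card ∧
            (2 : ℝ)⁻¹ ^ 5 * (energy A B₀ : ℝ) ≤ (energy A G₀ : ℝ)) →
        ∃ B' B'' : Finset G, Disjoint B' B'' ∧ B' ∪ B'' = B ∧
          (addDim B' : ℝ) ≤ c₁ * M * Real.log A.card * Real.log ((B.card : ℝ) * M / K) ∧
          c₂ * (energy A B : ℝ) ≤ (energy A B' : ℝ) ∧
          (energy A B'' : ℝ) ≤ (A.card : ℝ) * (B''.card : ℝ) ^ 2 / M := by
  intro C hC
  refine ⟨C * (2 / Real.log (32 / 31) + 1 / Real.log 2), 2⁻¹ ^ 5, by positivity, by positivity, ?_⟩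
  intro G _ _ A B M K hB2 hBA hK hKM hyp
  have hB : B.Nonempty := card_pos.1 (by omega)
  have hA : A.Nonempty := card_pos.1 (by omega)
  have hBpos : (0 : ℝ) < B.card := by exact_mod_cast hB.card_pos
  have hApos : (0 : ℝ) < A.card := by exact_mod_cast hA.card_pos
  have hAB : (0 : ℝ) < A.card * B.card ^ 2 := by positivity
  have hK0 : 0 < K := hK ▸ div_pos hAB (by exact_mod_cast addEnergy_pos hA hB)
  have hM : 0 < M := hK0.trans_le hKM
  have hEK : (energy A B : ℝ) = A.card * B.card ^ 2 / K := by rw [hK, div_div_cancel₀ hAB.ne']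
  have hlarge : (A.card : ℝ) * B.card ^ 2 / M ≤ energy A B :=
    hEK ▸ div_le_div_of_nonneg_left hAB.le hK0 hKM
  have hn := inv_pow_floor_mul_lt_div (by norm_num : (1 : ℝ) < 32 / 31) hApos hBpos hK0 hKM hEK
  rw [show (32 / 31 : ℝ)⁻¹ = 1 - 2⁻¹ ^ 5 by norm_num] at hn
  obtain ⟨B', B'', hdisj, hunion, hdim, henergy, hsmall⟩ :=
    exists_decomposition_of_pow_mul_energy_lt hM (by positivity) (by norm_num)
      (fun B₀ h₁ h₂ h₃ => (hyp B₀ h₁ h₂ h₃).imp fun _ ⟨h, _, hd, he⟩ => ⟨h, hd, he⟩) _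
      subset_rfl hn
  refine ⟨B', B'', hdisj, hunion, hdim.trans ?_, henergy hB hlarge, hsmall⟩
  have hBMK : 2 ≤ (B.card : ℝ) * M / K := mul_div_assoc (B.card : ℝ) M K ▸
    (Nat.ofNat_le_cast.2 hB2).trans (le_mul_of_one_le_right hBpos.le ((one_le_div hK0).2 hKM))
  calc _ ≤ (2 / Real.log (32 / 31) + 1 / Real.log 2) * Real.log (B.card * M / K) *
        (C * M * Real.log A.card) :=
      mul_le_mul_of_nonneg_right
        (Real.floor_two_mul_log_div_log_add_one_le (by norm_num) hBMK) (by positivity)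
    _ = _ := by ring
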